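/- Let G be a finite simple graph that is not edgeless. If there exists a permutation π of V(G) such that no separable γ-set of G is effective under π, then G is not a universal fixer, i.e., γ(πG) > γ(G) for some permutation π of V(G). -/

import Mathlib

/-!
Suppose `γ(πG) ≤ γ(G)` and let `D` be a γ-set of `πG`. Let `A1` be its part in `G` and `A2` the
`π`-preimage of its part in `G'`. A vertex of `G` outside `A1 ∪ A2` is dominated neither by itself
nor through its matching edge, hence by `A1`; so `A1 ∪ A2` dominates `G`, and
`γ(G) ≤ |A1 ∪ A2| ≤ |A1| + |A2| = |D| ≤ γ(G)` makes it a γ-set with disjoint parts. Read in `G'`,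
the same argument makes `π(A)` a γ-set of `G'` separated by `π(A2)`, so `A` is effective under `π`.
A part can only be empty if the other one is all of `V`, which is too large since an edge gives
`γ(G) < |V|`.
-/

open SimpleGraph

variable {V : Type*}

/-- `D` is a dominating set of `G`: every vertex is in `D` or adjacent to a vertex of `D`. -/
def IsDomSet (G : SimpleGraph V) (D : Set V) : Prop :=
  ∀ v : V, ∃ d ∈ D, d = v ∨ G.Adj d v

/-- The domination number of `G`: minimum cardinality of a dominating set. -/
noncomputable def domNum (G : SimpleGraph V) : ℕ :=
  sInf {n | ∃ D : Set V, IsDomSet G D ∧ D.ncard = n}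

/-- The prism `πG` of `G`: two disjoint copies of `G` together with the matching
`{u (π u) : u ∈ V(G)}`, the second copy playing the role of `G'`. -/
def prism (G : SimpleGraph V) (π : Equiv.Perm V) : SimpleGraph (V ⊕ V) where
  Adj a b :=
    match a, b with
    | Sum.inl u, Sum.inl v => G.Adj u v
    | Sum.inr u, Sum.inr v => G.Adj u v
    | Sum.inl u, Sum.inr v => π u = v
    | Sum.inr u, Sum.inl v => π v = u
  symm := ⟨by
    rintro (u | u) (v | v) h
    · exact G.adj_symm h
    · exact h
    · exact h
    · exact G.adj_symm h⟩
  loopless := ⟨by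
    rintro (u | u) h
    · exact G.irrefl h
    · exact G.irrefl h⟩

/-- The closed neighborhood `N[v]` of a vertex. -/
def closedNbhd (G : SimpleGraph V) (v : V) : Set V :=
  insert v (G.neighborSet v)

/-- `x` is a `C₃`-free vertex: non-isolated and belonging to no triangle of `G`. -/
def C3Free (G : SimpleGraph V) (x : V) : Prop :=
  (∃ y, G.Adj x y) ∧ ∀ u v : V, G.Adj x u → G.Adj x v → ¬ G.Adj u v

/-- `A = A1 ∪ A2` is a separable γ-set of `G` (an `A1`-γ-set): `A1, A2` are nonempty,
disjoint, `A` is a γ-set, and `A1` dominates `V(G) - A`. -/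
def SepGammaSet (G : SimpleGraph V) (A1 A2 : Set V) : Prop :=
  A1.Nonempty ∧ A2.Nonempty ∧ Disjoint A1 A2 ∧
  IsDomSet G (A1 ∪ A2) ∧ (A1 ∪ A2).ncard = domNum G ∧
  ∀ v ∉ A1 ∪ A2, ∃ u ∈ A1, G.Adj u v

/-- The separable γ-set `A = A1 ∪ A2` is effective under `π`: `π(A)` is a γ-set of the
copy `G'` of `G` (identified with `G`) whose dominating part is `B2' = π(A2)`,
i.e. `π(A2)` dominates `V(G') - π(A)`. -/
def Effective (G : SimpleGraph V) (π : Equiv.Perm V) (A1 A2 : Set V) : Prop :=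
  IsDomSet G (⇑π '' (A1 ∪ A2)) ∧ (⇑π '' (A1 ∪ A2)).ncard = domNum G ∧
  ∀ v ∉ ⇑π '' (A1 ∪ A2), ∃ u ∈ ⇑π '' A2, G.Adj u v

/-- The star `K_{1,m}` on `Fin (m+1)`, with center `0` adjacent to the `m` leaves. -/
def starGraph (m : ℕ) : SimpleGraph (Fin (m + 1)) where
  Adj a b := (a = 0 ∧ b ≠ 0) ∨ (b = 0 ∧ a ≠ 0)
  symm := ⟨fun a b h => Or.symm h⟩
  loopless := ⟨fun a h => by rcases h with ⟨h1, h2⟩ | ⟨h1, h2⟩ <;> exact h2 h1⟩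

lemma Set.ncard_preimage_inl_add_ncard_preimage_inr {α β : Type*} [Finite α] [Finite β]
    (s : Set (α ⊕ β)) : (Sum.inl ⁻¹' s).ncard + (Sum.inr ⁻¹' s).ncard = s.ncard := by
  conv_rhs => rw [← Set.image_preimage_inl_union_image_preimage_inr s]
  rw [Set.ncard_union_eq Set.disjoint_image_inl_image_inr,
    Set.ncard_image_of_injective _ Sum.inl_injective,
    Set.ncard_image_of_injective _ Sum.inr_injective]

section Domination

variable {G : SimpleGraph V}

lemma domNum_le_ncard {D : Set V} (hD : IsDomSet G D) : domNum G ≤ D.ncard :=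
  Nat.sInf_le ⟨D, hD, rfl⟩

lemma exists_isDomSet_ncard_eq_domNum (G : SimpleGraph V) :
    ∃ D : Set V, IsDomSet G D ∧ D.ncard = domNum G :=
  Nat.sInf_mem (s := {n | ∃ D : Set V, IsDomSet G D ∧ D.ncard = n})
    ⟨_, Set.univ, fun v => ⟨v, Set.mem_univ v, Or.inl rfl⟩, rfl⟩

lemma domNum_lt_card [Finite V] {u v : V} (huv : G.Adj u v) : domNum G < Nat.card V := by
  have hdom : IsDomSet G {u}ᶜ := fun w => by
    by_cases hw : w = u
    · exact ⟨v, huv.ne.symm, Or.inr (hw ▸ huv.symm)⟩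
    · exact ⟨w, hw, Or.inl rfl⟩
  calc domNum G ≤ ({u}ᶜ : Set V).ncard := domNum_le_ncard hdom
    _ < Nat.card V := Set.ncard_lt_card (Set.compl_ne_univ.2 (Set.singleton_nonempty u))

variable {S T : Set V}

lemma isDomSet_union_of_forall_notMem (hST : ∀ v ∉ S ∪ T, ∃ u ∈ S, G.Adj u v) :
    IsDomSet G (S ∪ T) := fun v => by
  by_cases hv : v ∈ S ∪ T
  · exact ⟨v, hv, Or.inl rfl⟩
  · obtain ⟨u, hu, huv⟩ := hST v hv
    exact ⟨u, Or.inl hu, Or.inr huv⟩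

lemma nonempty_of_forall_notMem_union [Finite V] (hST : ∀ v ∉ S ∪ T, ∃ u ∈ S, G.Adj u v)
    (hT : T.ncard < Nat.card V) : S.Nonempty := by
  by_contra hS
  rw [Set.not_nonempty_iff_eq_empty] at hS
  have hTuniv : T = Set.univ := Set.eq_univ_of_forall fun v => by
    by_contra hv
    obtain ⟨u, hu, -⟩ := hST v (by simp [hS, hv])
    simp [hS] at hu
  simp [hTuniv] at hT

lemma sepGammaSet_of_ncard_add_le [Finite V] (hST : ∀ v ∉ S ∪ T, ∃ u ∈ S, G.Adj u v)
    (hcard : S.ncard + T.ncard ≤ domNum G) (hS : S.Nonempty) (hT : T.Nonempty) :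
    SepGammaSet G S T := by
  have hdom := isDomSet_union_of_forall_notMem hST
  have hle := domNum_le_ncard hdom
  have hunion := Set.ncard_union_le S T
  exact ⟨hS, hT, (Set.ncard_union_eq_iff).1 (by omega), hdom, by omega, hST⟩

end Domination

lemma Effective.of_sepGammaSet_image {G : SimpleGraph V} {π : Equiv.Perm V} {A1 A2 : Set V}
    (h : SepGammaSet G (π '' A2) (π '' A1)) : Effective G π A1 A2 := by
  obtain ⟨-, -, -, hdom, hcard, hsep⟩ := h
  rw [Set.union_comm, ← Set.image_union] at hdom hcard hsep
  exact ⟨hdom, hcard, hsep⟩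

section Prism

variable {G : SimpleGraph V} {π : Equiv.Perm V} {D : Set (V ⊕ V)}

lemma IsDomSet.prism_inl (hD : IsDomSet (prism G π) D) :
    ∀ v ∉ Sum.inl ⁻¹' D ∪ π.symm '' (Sum.inr ⁻¹' D), ∃ u ∈ Sum.inl ⁻¹' D, G.Adj u v := by
  intro v hv
  obtain ⟨d | d, hd, hdv | hdv⟩ := hD (Sum.inl v)
  · exact absurd (Or.inl (Sum.inl_injective hdv ▸ hd)) hv
  · exact ⟨d, hd, hdv⟩
  · cases hdv
  · have hvd : π v = d := hdv
    exact absurd (Or.inr ⟨d, hd, by rw [← hvd, π.symm_apply_apply]⟩) hv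

lemma IsDomSet.prism_inr (hD : IsDomSet (prism G π) D) :
    ∀ w ∉ Sum.inr ⁻¹' D ∪ π '' (Sum.inl ⁻¹' D), ∃ b ∈ Sum.inr ⁻¹' D, G.Adj b w := by
  intro w hw
  obtain ⟨d | d, hd, hdw | hdw⟩ := hD (Sum.inr w)
  · cases hdw
  · exact absurd (Or.inr ⟨d, hd, hdw⟩) hw
  · exact absurd (Or.inl (Sum.inr_injective hdw ▸ hd)) hw
  · exact ⟨d, hd, hdw⟩

end Prism

/-- if `G` is not edgeless and some permutation `π` admits no effective
separable γ-set, then `G` is not a universal fixer. -/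
theorem not_universal_fixer_of_no_effective [Fintype V] (G : SimpleGraph V)
    (hedge : ∃ u v : V, G.Adj u v)
    (h : ∃ π : Equiv.Perm V, ∀ A1 A2 : Set V, SepGammaSet G A1 A2 → ¬ Effective G π A1 A2) :
    ∃ π : Equiv.Perm V, domNum G < domNum (prism G π) := by
  obtain ⟨u, v, huv⟩ := hedge
  obtain ⟨π, hπ⟩ := h
  refine ⟨π, lt_of_not_ge fun hle => ?_⟩
  obtain ⟨D, hD, hDcard⟩ := exists_isDomSet_ncard_eq_domNum (prism G π)
  set L := Sum.inl ⁻¹' D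
  set R := Sum.inr ⁻¹' D
  have hcard : L.ncard + R.ncard ≤ domNum G :=
    (Set.ncard_preimage_inl_add_ncard_preimage_inr D).trans_le (hDcard.trans_le hle)
  have hleft : ∀ v ∉ L ∪ π.symm '' R, ∃ u ∈ L, G.Adj u v := hD.prism_inl
  have hright : ∀ w ∉ R ∪ π '' L, ∃ b ∈ R, G.Adj b w := hD.prism_inr
  have hcardL : (π '' L).ncard = L.ncard := Set.ncard_image_of_injective _ π.injective
  have hcardR : (π.symm '' R).ncard = R.ncard := Set.ncard_image_of_injective _ π.symm.injective
  have hγ := domNum_lt_card huv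
  have hL : L.Nonempty := nonempty_of_forall_notMem_union hleft (by omega)
  have hR : R.Nonempty := nonempty_of_forall_notMem_union hright (by omega)
  refine hπ L (π.symm '' R)
    (sepGammaSet_of_ncard_add_le hleft (by omega) hL (hR.image _)) ?_
  refine Effective.of_sepGammaSet_image ?_
  rw [π.image_symm_image]
  exact sepGammaSet_of_ncard_add_le hright (by omega) hR (hL.image _)
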